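/- Let B = [[5,2],[3,1]], B₁ = [[1,1],[1,0]], and D_n = tr(B₁ B^{n+1})² − 4(−1)^n. If n is odd or n ≢ ±1 (mod 5), then D_n is not of the form 10b² for any integer b; consequently √D_n ∉ ℚ(√10). -/

import Mathlib

/-! The traces `t n = tr(B₁ B^(n+1))` satisfy `t (n+2) = 6 t (n+1) + t n` (Cayley–Hamilton:
`B` has trace 6 and determinant −1), with `t 0 = 10`, `t 1 = 61`. Hence `t n ≡ n (mod 2)` and
`t n ≡ F n (mod 5)`, so `D n ≡ n (mod 2)` and, by Cassini's identity,
`D n ≡ F (n+1) F (n-1) (mod 5)`. As `5 ∣ F m ↔ 5 ∣ m`, `10 ∣ D n` forces `n` even and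
`n ≡ ±1 (mod 5)`.

If `√D = a + b√10` with `a, b` rational, squaring and the irrationality of `√10` give `ab = 0`,
so `D` or `10 D` is a square. But `D = t² ∓ 4` lies strictly between consecutive squares, and
`10 D = k²` gives `10 ∣ k`, hence `10 ∣ D`. -/

open Matrix

/-- `D n = tr(B₁ B^(n+1))² − 4(−1)^n` for `B = [[5,2],[3,1]]`, `B₁ = [[1,1],[1,0]]`. -/
def Dseq (n : ℕ) : ℤ :=
  (Matrix.trace (!![(1 : ℤ), 1; 1, 0] * (!![(5 : ℤ), 2; 3, 1]) ^ (n + 1))) ^ 2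
    - 4 * (-1) ^ n

theorem Matrix.trace_mul_pow_add_two {ι R : Type*} [Fintype ι] [DecidableEq ι] [CommRing R]
    {M : Matrix ι ι R} {a b : R} (hM : M ^ 2 = a • M + b • 1) (C : Matrix ι ι R) (k : ℕ) :
    trace (C * M ^ (k + 2)) = a * trace (C * M ^ (k + 1)) + b * trace (C * M ^ k) := by
  rw [pow_add, hM, pow_succ]
  simp only [mul_add, Matrix.mul_smul, mul_one, trace_add, trace_smul, smul_eq_mul]

def traceSeq (n : ℕ) : ℤ :=
  trace (!![(1 : ℤ), 1; 1, 0] * !![(5 : ℤ), 2; 3, 1] ^ (n + 1))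

theorem Dseq_eq (n : ℕ) : Dseq n = traceSeq n ^ 2 - 4 * (-1) ^ n := rfl

theorem traceSeq_zero : traceSeq 0 = 10 := by
  simp [traceSeq, Matrix.trace_fin_two]

theorem traceSeq_one : traceSeq 1 = 61 := by
  simp [traceSeq, sq, Matrix.trace_fin_two]

theorem traceSeq_add_two (n : ℕ) : traceSeq (n + 2) = 6 * traceSeq (n + 1) + traceSeq n := by
  have hB : !![(5 : ℤ), 2; 3, 1] ^ 2 = (6 : ℤ) • !![(5 : ℤ), 2; 3, 1] + (1 : ℤ) • 1 := by
    ext i j; fin_cases i <;> fin_cases j <;> simp [sq, Matrix.mul_apply, Fin.sum_univ_two]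
  rw [← one_mul (traceSeq n)]
  exact Matrix.trace_mul_pow_add_two hB !![(1 : ℤ), 1; 1, 0] (n + 1)

theorem ten_le_traceSeq : ∀ n, 10 ≤ traceSeq n
  | 0 => traceSeq_zero.ge
  | 1 => by simp [traceSeq_one]
  | n + 2 => by
    rw [traceSeq_add_two]
    linarith [ten_le_traceSeq n, ten_le_traceSeq (n + 1)]

theorem traceSeq_cast_zmod_two : ∀ n : ℕ, (traceSeq n : ZMod 2) = n
  | 0 => by rw [traceSeq_zero]; decide
  | 1 => by rw [traceSeq_one]; decide
  | n + 2 => by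
    rw [traceSeq_add_two]
    push_cast [traceSeq_cast_zmod_two n]
    reduce_mod_char

theorem traceSeq_cast_zmod_five : ∀ n : ℕ, (traceSeq n : ZMod 5) = Int.fib n
  | 0 => by rw [traceSeq_zero]; decide
  | 1 => by rw [traceSeq_one]; decide
  | n + 2 => by
    rw [traceSeq_add_two]
    push_cast [traceSeq_cast_zmod_five n, traceSeq_cast_zmod_five (n + 1), Int.fib_add_two]
    reduce_mod_char
    ring

theorem Dseq_cast_zmod_two (n : ℕ) : (Dseq n : ZMod 2) = n := by
  rw [Dseq_eq]
  push_cast [traceSeq_cast_zmod_two]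
  reduce_mod_char
  exact ZMod.pow_card _

theorem Dseq_cast_zmod_five (n : ℕ) :
    (Dseq n : ZMod 5) = Int.fib (n + 1) * Int.fib (n - 1) := by
  have cassini := congrArg (Int.cast : ℤ → ZMod 5) (Int.fib_succ_mul_fib_pred_sub_fib_sq n)
  push_cast [Int.natAbs_natCast] at cassini
  have h5 : (5 : ZMod 5) = 0 := rfl
  rw [Dseq_eq]
  push_cast [traceSeq_cast_zmod_five]
  linear_combination -cassini - (-1) ^ n * h5

theorem Int.five_dvd_fib_iff (m : ℤ) : 5 ∣ Int.fib m ↔ 5 ∣ m := by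
  refine ⟨fun h => ?_, Int.fib_dvd 5 m⟩
  have hfib : Nat.fib (m.gcd 5) = 5 := by
    rw [← Int.gcd_fib]
    change (Int.fib m).gcd 5 = 5
    exact_mod_cast Int.gcd_eq_right (by norm_num) h
  have hle : m.gcd 5 ≤ 5 := by exact_mod_cast Int.gcd_le_right (b := 5) m (by norm_num)
  rw [← Int.gcd_eq_right_iff_dvd (by norm_num)]
  interval_cases hg : m.gcd 5 <;> simp_all [Nat.fib_add_two]

theorem two_dvd_Dseq_iff (n : ℕ) : 2 ∣ Dseq n ↔ Even n := by
  rw [even_iff_two_dvd, ← ZMod.natCast_eq_zero_iff, ← Dseq_cast_zmod_two,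
    ZMod.intCast_zmod_eq_zero_iff_dvd, Nat.cast_ofNat]

theorem five_dvd_Dseq_iff (n : ℕ) : 5 ∣ Dseq n ↔ n % 5 = 1 ∨ n % 5 = 4 := by
  have : Fact (Nat.Prime 5) := ⟨Nat.prime_five⟩
  have hcast (z : ℤ) : (z : ZMod 5) = 0 ↔ 5 ∣ z := ZMod.intCast_zmod_eq_zero_iff_dvd z 5
  rw [← hcast, Dseq_cast_zmod_five, mul_eq_zero, hcast, hcast, Int.five_dvd_fib_iff,
    Int.five_dvd_fib_iff]
  omega

theorem not_ten_dvd_Dseq {n : ℕ} (hn : Odd n ∨ (n % 5 ≠ 1 ∧ n % 5 ≠ 4)) : ¬10 ∣ Dseq n := by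
  intro h
  have h2 := (two_dvd_Dseq_iff n).1 (dvd_trans (by norm_num) h)
  have h5 := (five_dvd_Dseq_iff n).1 (dvd_trans (by norm_num) h)
  rcases hn with hodd | hn
  · exact Nat.not_even_iff_odd.2 hodd h2
  · omega

theorem Int.not_isSquare_sq_sub {t c : ℤ} (hc : c ≠ 0) (hct : |c| < 2 * t - 1) :
    ¬IsSquare (t ^ 2 - c) := by
  rintro ⟨r, hr⟩
  have habs : |r| * |r| = r * r := abs_mul_abs_self r
  obtain ⟨hc₁, hc₂⟩ := abs_lt.1 hct
  have h1 : t - 1 < |r| := by nlinarith [abs_nonneg r]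
  have h2 : |r| < t + 1 := by nlinarith [abs_nonneg r]
  have : |r| = t := by omega
  apply hc
  nlinarith

theorem Dseq_nonneg (n : ℕ) : 0 ≤ Dseq n := by
  rcases neg_one_pow_eq_or ℤ n with h | h <;> rw [Dseq_eq, h] <;> nlinarith [ten_le_traceSeq n]

theorem not_isSquare_Dseq (n : ℕ) : ¬IsSquare (Dseq n) := by
  rw [Dseq_eq]
  refine Int.not_isSquare_sq_sub (by simp) ?_
  have := ten_le_traceSeq n
  simp only [abs_mul, abs_pow, abs_neg, abs_one, one_pow, mul_one]
  norm_num
  linarith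

theorem isSquare_of_sqrt_eq_ratCast {z : ℤ} (hz : 0 ≤ z) {q : ℚ} (h : √(z : ℝ) = q) :
    IsSquare z := by
  by_contra hsq
  exact (irrational_sqrt_intCast_iff_of_nonneg hz).2 hsq ⟨q, h.symm⟩

theorem isSquare_or_isSquare_mul_of_sqrt_eq {d D : ℤ} (hd : Irrational √(d : ℝ)) (hD : 0 ≤ D)
    {a b : ℚ} (h : √(D : ℝ) = a + b * √(d : ℝ)) : IsSquare D ∨ IsSquare (d * D) := by
  have hd0 : 0 ≤ d := (irrational_sqrt_intCast_iff.1 hd).2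
  have hd' : √(d : ℝ) ^ 2 = d := Real.sq_sqrt (by exact_mod_cast hd0)
  have hsq : (D : ℝ) = a ^ 2 + d * b ^ 2 + 2 * a * b * √(d : ℝ) := by
    rw [← Real.sq_sqrt (by exact_mod_cast hD : (0 : ℝ) ≤ D), h]
    linear_combination b ^ 2 * hd'
  have hab : a * b = 0 := by
    by_contra hab
    refine hd ⟨(D - a ^ 2 - d * b ^ 2) / (2 * (a * b)), ?_⟩
    obtain ⟨ha, hb⟩ : (a : ℝ) ≠ 0 ∧ (b : ℝ) ≠ 0 := by exact_mod_cast mul_ne_zero_iff.1 hab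
    push_cast
    field_simp
    linear_combination hsq
  rcases mul_eq_zero.1 hab with rfl | rfl
  · right
    refine isSquare_of_sqrt_eq_ratCast (mul_nonneg hd0 hD) (q := b * d) ?_
    push_cast
    rw [Real.sqrt_mul (by exact_mod_cast hd0), h]
    linear_combination b * hd'
  · left
    exact isSquare_of_sqrt_eq_ratCast hD (by simpa using h)

theorem dvd_of_isSquare_mul {R : Type*} [CommMonoidWithZero R] [IsCancelMulZero R]
    [DecompositionMonoid R] {d D : R} (hd : Squarefree d) (hd0 : d ≠ 0) (h : IsSquare (d * D)) :
    d ∣ D := by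
  obtain ⟨k, hk⟩ := h
  obtain ⟨m, rfl⟩ : d ∣ k := (hd.dvd_pow_iff_dvd two_ne_zero).1 ⟨D, by rw [sq, ← hk]⟩
  exact ⟨m * m, mul_left_cancel₀ hd0 (by rw [hk]; ac_rfl)⟩

theorem stmt_18 (n : ℕ) (hn : Odd n ∨ (n % 5 ≠ 1 ∧ n % 5 ≠ 4)) :
    (∀ b : ℤ, Dseq n ≠ 10 * b ^ 2) ∧
    ¬∃ a b : ℚ, Real.sqrt (Dseq n) = (a : ℝ) + (b : ℝ) * Real.sqrt 10 := by
  have hten := not_ten_dvd_Dseq hn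
  refine ⟨fun b hb => hten ⟨b ^ 2, hb⟩, ?_⟩
  rintro ⟨a, b, h⟩
  have hirr : Irrational √((10 : ℤ) : ℝ) :=
    irrational_sqrt_intCast_iff.2 ⟨by decide +kernel, by norm_num⟩
  have hsqfree : Squarefree (10 : ℤ) := Int.squarefree_natCast.2 (by decide +kernel)
  rcases isSquare_or_isSquare_mul_of_sqrt_eq hirr (Dseq_nonneg n) (by simpa using h)
    with hsq | hsq
  · exact not_isSquare_Dseq n hsq
  · exact hten (dvd_of_isSquare_mul hsqfree (by norm_num) hsq)
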